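/- arXiv:1711.04643 — 3 statements merged into one kernel-verified Lean document; each statement's English description precedes it below -/
import Mathlib

section
/- Let 0 < m ≤ M, η > 0, and let φ = (φ₁, φ₂) : ℂ × ℂ → ℂ × ℂ satisfy m‖p−q‖ ≤ ‖φ(p)−φ(q)‖ ≤ M‖p−q‖ for all p, q in the open ball B(0,η). If φ is Fréchet differentiable over ℝ at a point p ∈ B(0,η), then the ℝ-linear Fréchet derivatives of the two component functions satisfy m ≤ ‖Dφ₁(p)‖ ≤ M and m ≤ ‖Dφ₂(p)‖ ≤ M, where ‖·‖ denotes the operator norm of an ℝ-linear map ℂ × ℂ → ℂ. -/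
open Filter Metric

/-- If `φ = (φ₁, φ₂)` is `(m,M)`-bi-Lipschitz on the open ball `B(0,η)` in
`ℂ × ℂ` and is Fréchet differentiable over `ℝ` at a point `p ∈ B(0,η)`, then the ℝ-linear
Fréchet derivatives of its two component functions satisfy `m ≤ ‖Dφ₁(p)‖ ≤ M` and
`m ≤ ‖Dφ₂(p)‖ ≤ M` (operator norms). -/
theorem component_derivative_norm_bounds
    (m M η : ℝ) (hm : 0 < m) (hmM : m ≤ M) (hη : 0 < η)
    (φ : ℂ × ℂ → ℂ × ℂ)
    (hbl : ∀ p ∈ ball (0 : ℂ × ℂ) η, ∀ q ∈ ball (0 : ℂ × ℂ) η,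
      m * ‖p - q‖ ≤ ‖φ p - φ q‖ ∧ ‖φ p - φ q‖ ≤ M * ‖p - q‖)
    (p : ℂ × ℂ) (hp : p ∈ ball (0 : ℂ × ℂ) η)
    (hdiff : DifferentiableAt ℝ φ p) :
    (m ≤ ‖fderiv ℝ (fun q => (φ q).1) p‖ ∧ ‖fderiv ℝ (fun q => (φ q).1) p‖ ≤ M) ∧
    (m ≤ ‖fderiv ℝ (fun q => (φ q).2) p‖ ∧ ‖fderiv ℝ (fun q => (φ q).2) p‖ ≤ M) := by
  have hd := hdiff.hasFDerivAt
  set f := fderiv ℝ φ p with hf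
  -- key pointwise bounds on the full derivative
  have key : ∀ v : ℂ × ℂ, m * ‖v‖ ≤ ‖f v‖ ∧ ‖f v‖ ≤ M * ‖v‖ := by
    intro v
    have hc : Tendsto (fun t : ℝ => ‖t⁻¹‖) (nhdsWithin 0 (Set.Ioi 0)) atTop := by
      refine tendsto_inv_nhdsGT_zero.congr' ?_
      filter_upwards [self_mem_nhdsWithin] with t (ht : (0:ℝ) < t)
      rw [Real.norm_eq_abs, abs_of_pos (inv_pos.mpr ht)]
    have hlim := hd.lim v hc
    simp only [inv_inv] at hlim
    have hnorm := hlim.norm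
    have hmem : ∀ᶠ t : ℝ in nhdsWithin 0 (Set.Ioi 0), p + t • v ∈ ball (0 : ℂ × ℂ) η := by
      have hcont : Tendsto (fun t : ℝ => p + t • v) (nhdsWithin 0 (Set.Ioi 0)) (nhds p) := by
        have : Tendsto (fun t : ℝ => p + t • v) (nhds (0:ℝ)) (nhds p) := by
          have hc2 : Continuous (fun t : ℝ => p + t • v) :=
            continuous_const.add (continuous_id.smul continuous_const)
          simpa using hc2.tendsto 0
        exact this.mono_left nhdsWithin_le_nhds
      exact hcont.eventually (isOpen_ball.mem_nhds hp)
    have hbound : ∀ᶠ t : ℝ in nhdsWithin 0 (Set.Ioi 0),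
        m * ‖v‖ ≤ ‖t⁻¹ • (φ (p + t • v) - φ p)‖ ∧
        ‖t⁻¹ • (φ (p + t • v) - φ p)‖ ≤ M * ‖v‖ := by
      filter_upwards [hmem, self_mem_nhdsWithin] with t hmemt (ht : (0:ℝ) < t)
      obtain ⟨h1, h2⟩ := hbl (p + t • v) hmemt p hp
      have hsub : (p + t • v) - p = t • v := by abel
      rw [hsub, norm_smul, Real.norm_eq_abs, abs_of_pos ht] at h1 h2
      rw [norm_smul, Real.norm_eq_abs, abs_of_pos (inv_pos.mpr ht)]
      constructor
      · calc m * ‖v‖ = t⁻¹ * (m * (t * ‖v‖)) := by field_simp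
          _ ≤ t⁻¹ * ‖φ (p + t • v) - φ p‖ := by
              exact mul_le_mul_of_nonneg_left h1 (le_of_lt (inv_pos.mpr ht))
      · calc t⁻¹ * ‖φ (p + t • v) - φ p‖ ≤ t⁻¹ * (M * (t * ‖v‖)) := by
              exact mul_le_mul_of_nonneg_left h2 (le_of_lt (inv_pos.mpr ht))
          _ = M * ‖v‖ := by field_simp
    constructor
    · exact ge_of_tendsto hnorm (hbound.mono fun t ht => ht.1)
    · exact le_of_tendsto hnorm (hbound.mono fun t ht => ht.2)
  -- component derivatives
  have hfst : fderiv ℝ (fun q => (φ q).1) p =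
      (ContinuousLinearMap.fst ℝ ℂ ℂ).comp f := hd.fst.fderiv
  have hsnd : fderiv ℝ (fun q => (φ q).2) p =
      (ContinuousLinearMap.snd ℝ ℂ ℂ).comp f := hd.snd.fderiv
  set f1 := (ContinuousLinearMap.fst ℝ ℂ ℂ).comp f with hf1
  set f2 := (ContinuousLinearMap.snd ℝ ℂ ℂ).comp f with hf2
  -- upper bounds
  have hub1 : ‖f1‖ ≤ M := by
    refine ContinuousLinearMap.opNorm_le_bound _ (le_trans hm.le hmM) fun v => ?_
    have : ‖f1 v‖ ≤ ‖f v‖ := by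
      rw [Prod.norm_def]
      exact le_max_left _ _
    exact this.trans (key v).2
  have hub2 : ‖f2‖ ≤ M := by
    refine ContinuousLinearMap.opNorm_le_bound _ (le_trans hm.le hmM) fun v => ?_
    have : ‖f2 v‖ ≤ ‖f v‖ := by
      rw [Prod.norm_def]
      exact le_max_right _ _
    exact this.trans (key v).2
  -- lower bounds: kernels are nontrivial for dimension reasons
  have hdim : ¬ (Module.finrank ℝ (ℂ × ℂ) ≤ Module.finrank ℝ ℂ) := by
    simp [Module.finrank_prod, Complex.finrank_real_complex]
  have hker : ∀ g : (ℂ × ℂ) →L[ℝ] ℂ, ∃ v : ℂ × ℂ, v ≠ 0 ∧ g v = 0 := by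
    intro g
    by_contra h
    push_neg at h
    have hinj : Function.Injective (g : (ℂ × ℂ) →ₗ[ℝ] ℂ) := by
      rw [← LinearMap.ker_eq_bot, LinearMap.ker_eq_bot']
      intro v hv
      by_contra hv0
      exact (h v hv0) hv
    exact hdim (LinearMap.finrank_le_finrank_of_injective hinj)
  have hlb1 : m ≤ ‖f1‖ := by
    obtain ⟨v, hv0, hv⟩ := hker f2
    have h1 : m * ‖v‖ ≤ ‖f v‖ := (key v).1
    have h2 : ‖f v‖ = ‖f1 v‖ := by
      rw [Prod.norm_def]
      have : (f v).2 = f2 v := rfl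
      rw [show ‖(f v).2‖ = (0:ℝ) by rw [this, hv, norm_zero]]
      have : ‖f1 v‖ = ‖(f v).1‖ := rfl
      rw [this]
      exact max_eq_left (norm_nonneg _)
    have h3 : m * ‖v‖ ≤ ‖f1‖ * ‖v‖ := by
      calc m * ‖v‖ ≤ ‖f1 v‖ := h2 ▸ h1
        _ ≤ ‖f1‖ * ‖v‖ := f1.le_opNorm v
    exact le_of_mul_le_mul_right h3 (norm_pos_iff.mpr hv0)
  have hlb2 : m ≤ ‖f2‖ := by
    obtain ⟨v, hv0, hv⟩ := hker f1
    have h1 : m * ‖v‖ ≤ ‖f v‖ := (key v).1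
    have h2 : ‖f v‖ = ‖f2 v‖ := by
      rw [Prod.norm_def]
      have : (f v).1 = f1 v := rfl
      rw [show ‖(f v).1‖ = (0:ℝ) by rw [this, hv, norm_zero]]
      have : ‖f2 v‖ = ‖(f v).2‖ := rfl
      rw [this]
      exact max_eq_right (norm_nonneg _)
    have h3 : m * ‖v‖ ≤ ‖f2‖ * ‖v‖ := by
      calc m * ‖v‖ ≤ ‖f2 v‖ := h2 ▸ h1
        _ ≤ ‖f2‖ * ‖v‖ := f2.le_opNorm v
    exact le_of_mul_le_mul_right h3 (norm_pos_iff.mpr hv0)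
  rw [hfst, hsnd]
  exact ⟨⟨hlb1, hub1⟩, ⟨hlb2, hub2⟩⟩
end

section
/- Let U ⊆ ℂ be a nonempty connected open set, let r > 0, and let G : U × B(0,r) → ℂ be complex analytic in both variables jointly. Assume there exists u₁ ∈ U such that the function y ↦ G(u₁, y) is not identically zero on any neighborhood of 0. Then there exist L ∈ ℕ and a complex analytic function c : U → ℂ, not identically zero, such that for every u ∈ U: the vanishing order at 0 of y ↦ G(u, y) is at least L, and it equals L if and only if c(u) ≠ 0. -/
/-!
The coefficients `c n u = ∂ⁿ_y G(u, 0)` depend analytically on `u`, because `∂_y` preserves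
joint analyticity. For each `u`, the order of `y ↦ G(u, y)` is at least `L` exactly when
`c 0 u, …, c (L-1) u` vanish, and equals `L` when in addition `c L u ≠ 0`. So take `L` least
such that `c L` does not vanish identically on `U` (it exists because `y ↦ G(u₁, y)` has finite
order), and `c := c L`.
-/

open Filter

/-- The vanishing order at `0` of a function `u : ℂ → ℂ`: the least `n` such that the
`n`-th Taylor coefficient of `u` at `0` is nonzero (equivalently, `iteratedDeriv n u 0 ≠ 0`),
taken in `ℕ∞` so that it is `⊤` when no Taylor coefficient is nonzero. -/
noncomputable def ord₀ (u : ℂ → ℂ) : ℕ∞ :=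
  sInf ((fun n : ℕ => (n : ℕ∞)) '' {n : ℕ | iteratedDeriv n u 0 ≠ 0})

section SliceDerivative

variable {𝕜 E F : Type*} [NontriviallyNormedField 𝕜] [NormedAddCommGroup E] [NormedSpace 𝕜 E]
  [NormedAddCommGroup F] [NormedSpace 𝕜 F] [CompleteSpace F]

theorem analyticOnNhd_iteratedDeriv_slice (G : E × 𝕜 → F) (n : ℕ) :
    AnalyticOnNhd 𝕜 (fun p : E × 𝕜 => iteratedDeriv n (fun y => G (p.1, y)) p.2)
      {p | AnalyticAt 𝕜 G p} := by
  induction n with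
  | zero => intro p hp; simpa using hp
  | succ n ih =>
    intro p hp
    set H := fun q : E × 𝕜 => iteratedDeriv n (fun y => G (q.1, y)) q.2
    have hpartial : (fun q => fderiv 𝕜 H q (0, 1)) =ᶠ[nhds p]
        fun q => iteratedDeriv (n + 1) (fun y => G (q.1, y)) q.2 := by
      filter_upwards [(isOpen_analyticAt 𝕜 G).mem_nhds hp] with q hq
      have hline : HasDerivAt (fun y : 𝕜 => (q.1, y)) ((0 : E), (1 : 𝕜)) q.2 :=
        (hasDerivAt_const _ _).prodMk (hasDerivAt_id _)
      rw [iteratedDeriv_succ]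
      exact ((ih q hq).differentiableAt.hasFDerivAt.comp_hasDerivAt q.2 hline).deriv.symm
    exact (((ContinuousLinearMap.apply 𝕜 F ((0 : E), (1 : 𝕜))).analyticAt _).comp
      (ih.fderiv p hp)).congr hpartial

theorem AnalyticAt.analyticAt_iteratedDeriv_slice {G : E × 𝕜 → F} {x : E} {y₀ : 𝕜}
    (hG : AnalyticAt 𝕜 G (x, y₀)) (n : ℕ) :
    AnalyticAt 𝕜 (fun x' => iteratedDeriv n (fun y => G (x', y)) y₀) x :=
  (analyticOnNhd_iteratedDeriv_slice G n (x, y₀) hG).comp (f := fun x' => (x', y₀))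
    (analyticAt_id.prod analyticAt_const)

end SliceDerivative

theorem natCast_le_ord₀_iff {u : ℂ → ℂ} {n : ℕ} :
    (n : ℕ∞) ≤ ord₀ u ↔ ∀ i < n, iteratedDeriv i u 0 = 0 := by
  simp only [ord₀, le_sInf_iff, Set.forall_mem_image, Set.mem_ofPred_eq, Nat.cast_le]
  exact ⟨fun h i hi => by_contra fun hne => (h hne).not_gt hi,
    fun h i hi => le_of_not_gt fun hlt => hi (h i hlt)⟩

theorem AnalyticAt.ord₀_eq_analyticOrderAt {u : ℂ → ℂ} (hu : AnalyticAt ℂ u 0) :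
    ord₀ u = analyticOrderAt u 0 :=
  ENat.eq_of_forall_natCast_le_iff fun _ => by
    rw [natCast_le_ord₀_iff, natCast_le_analyticOrderAt_iff_iteratedDeriv_eq_zero hu]

theorem generic_order_of_analytic_family_general
    (U : Set ℂ) (r : ℝ) (hr : 0 < r) (G : ℂ × ℂ → ℂ)
    (hG : ∀ p ∈ U ×ˢ Metric.ball (0 : ℂ) r, AnalyticAt ℂ G p)
    (hne : ∃ u₁ ∈ U, ¬ ∀ᶠ y in nhds (0 : ℂ), G (u₁, y) = 0) :
    ∃ (L : ℕ) (c : ℂ → ℂ), (∀ u ∈ U, AnalyticAt ℂ c u) ∧ (∃ u ∈ U, c u ≠ 0) ∧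
      ∀ u ∈ U, (L : ℕ∞) ≤ ord₀ (fun y => G (u, y)) ∧
        (ord₀ (fun y => G (u, y)) = (L : ℕ∞) ↔ c u ≠ 0) := by
  classical
  have hGu : ∀ u ∈ U, AnalyticAt ℂ G (u, 0) := fun u hu => hG _ ⟨hu, Metric.mem_ball_self hr⟩
  have hslice : ∀ u ∈ U, AnalyticAt ℂ (fun y => G (u, y)) 0 := fun u hu =>
    (hGu u hu).comp (analyticAt_const.prod analyticAt_id)
  set c : ℕ → ℂ → ℂ := fun n u => iteratedDeriv n (fun y => G (u, y)) 0
  have hsome : ∃ n, ∃ u ∈ U, c n u ≠ 0 := by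
    obtain ⟨u₁, hu₁, hne₁⟩ := hne
    obtain ⟨m, hm⟩ := ENat.ne_top_iff_exists.mp (analyticOrderAt_eq_top.not.mpr hne₁)
    exact ⟨m, u₁, hu₁,
      ((analyticOrderAt_eq_nat_iff_iteratedDeriv_eq_zero (hslice u₁ hu₁)).mp hm.symm).2⟩
  refine ⟨Nat.find hsome, c (Nat.find hsome),
    fun u hu => (hGu u hu).analyticAt_iteratedDeriv_slice _, Nat.find_spec hsome, fun u hu => ?_⟩
  have hbelow : ∀ k < Nat.find hsome, c k u = 0 := fun k hk =>
    by_contra fun h => Nat.find_min hsome hk ⟨u, hu, h⟩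
  rw [(hslice u hu).ord₀_eq_analyticOrderAt,
    natCast_le_analyticOrderAt_iff_iteratedDeriv_eq_zero (hslice u hu),
    analyticOrderAt_eq_nat_iff_iteratedDeriv_eq_zero (hslice u hu)]
  exact ⟨hbelow, and_iff_right hbelow⟩

/-- Let `U ⊆ ℂ` be a nonempty connected open set, `r > 0`, and let
`G : U × B(0,r) → ℂ` be complex analytic (jointly). If for some `u₁ ∈ U` the function
`y ↦ G(u₁, y)` is not identically zero near `0`, then there are `L ∈ ℕ` and an analytic
function `c : U → ℂ`, not identically zero, such that for every `u ∈ U` the vanishing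
order at `0` of `y ↦ G(u,y)` is at least `L`, with equality iff `c(u) ≠ 0`. -/
theorem generic_order_of_analytic_family
    (U : Set ℂ) (hUopen : IsOpen U) (hUne : U.Nonempty) (hUconn : IsConnected U)
    (r : ℝ) (hr : 0 < r) (G : ℂ × ℂ → ℂ)
    (hG : ∀ p ∈ U ×ˢ Metric.ball (0 : ℂ) r, AnalyticAt ℂ G p)
    (hne : ∃ u₁ ∈ U, ¬ ∀ᶠ y in nhds (0 : ℂ), G (u₁, y) = 0) :
    ∃ (L : ℕ) (c : ℂ → ℂ), (∀ u ∈ U, AnalyticAt ℂ c u) ∧ (∃ u ∈ U, c u ≠ 0) ∧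
      ∀ u ∈ U, (L : ℕ∞) ≤ ord₀ (fun y => G (u, y)) ∧
        (ord₀ (fun y => G (u, y)) = (L : ℕ∞) ↔ c u ≠ 0) :=
  generic_order_of_analytic_family_general U r hr G hG hne
end

section
/- Let f be complex analytic on a neighborhood of (0,0) ∈ ℂ × ℂ and let α : ℂ → ℂ be analytic near 0 with α(0) = 0. Assume the functions y ↦ f_x(α(y), y) and y ↦ f_y(α(y), y) do not both vanish identically near 0, and let L ∈ ℕ be the minimum of their vanishing orders at 0. Then for every natural number q > L and every u ∈ ℂ: min( ord₀(y ↦ f_x(α(y) + u y^q, y)), ord₀(y ↦ f_y(α(y) + u y^q, y)) ) = L. (This is the stabilization of the order of the gradient of f along an arc under perturbations of sufficiently high degree.) -/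
open Filter

open Asymptotics Topology

lemma ord0_le_of_ne {u : ℂ → ℂ} {n : ℕ} (h : iteratedDeriv n u 0 ≠ 0) :
    ord₀ u ≤ (n : ℕ∞) :=
  sInf_le ⟨n, h, rfl⟩

lemma le_ord0 {u : ℂ → ℂ} {n : ℕ} (h : ∀ k < n, iteratedDeriv k u 0 = 0) :
    (n : ℕ∞) ≤ ord₀ u := by
  apply le_sInf
  rintro b ⟨k, hk, rfl⟩
  have hnk : n ≤ k := not_lt.1 fun hlt => hk (h k hlt)
  show (n : ℕ∞) ≤ (k : ℕ∞)
  exact_mod_cast hnk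

lemma deriv_zero_of_le_ord0 {u : ℂ → ℂ} {n : ℕ} (h : (n : ℕ∞) ≤ ord₀ u) :
    ∀ k < n, iteratedDeriv k u 0 = 0 := by
  intro k hk
  by_contra hc
  have h1 : (n : ℕ∞) ≤ (k : ℕ∞) := le_trans h (ord0_le_of_ne hc)
  have : n ≤ k := by exact_mod_cast h1
  omega

lemma ord0_eq_of {u : ℂ → ℂ} {n : ℕ} (h1 : iteratedDeriv n u 0 ≠ 0)
    (h2 : ∀ k < n, iteratedDeriv k u 0 = 0) : ord₀ u = (n : ℕ∞) :=
  le_antisymm (ord0_le_of_ne h1) (le_ord0 h2)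

lemma ord0_eq_iff {u : ℂ → ℂ} {n : ℕ} :
    ord₀ u = (n : ℕ∞) ↔ iteratedDeriv n u 0 ≠ 0 ∧ ∀ k < n, iteratedDeriv k u 0 = 0 := by
  constructor
  · intro h
    by_cases hS : {k : ℕ | iteratedDeriv k u 0 ≠ 0}.Nonempty
    · have hm : iteratedDeriv (sInf {k : ℕ | iteratedDeriv k u 0 ≠ 0}) u 0 ≠ 0 :=
        Nat.sInf_mem hS
      have hmin : ∀ k < sInf {k : ℕ | iteratedDeriv k u 0 ≠ 0}, iteratedDeriv k u 0 = 0 := by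
        intro k hk
        by_contra hc
        exact Nat.notMem_of_lt_sInf hk hc
      have heq := ord0_eq_of hm hmin
      rw [h] at heq
      have : n = sInf {k : ℕ | iteratedDeriv k u 0 ≠ 0} := by exact_mod_cast heq
      rw [this]
      exact ⟨hm, hmin⟩
    · exfalso
      rw [Set.not_nonempty_iff_eq_empty] at hS
      rw [ord₀, hS, Set.image_empty, sInf_empty] at h
      exact (ENat.coe_ne_top n).symm h
  · rintro ⟨h1, h2⟩
    exact ord0_eq_of h1 h2

/-- If `D` has a power series at `0` and `D = O(‖y‖^q)`, then all coefficients of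
index `< q` vanish. -/
lemma coeff_zero_of_isBigO {D : ℂ → ℂ} {p : FormalMultilinearSeries ℂ ℂ ℂ}
    (h : HasFPowerSeriesAt D p 0) {q : ℕ} (hO : D =O[𝓝 (0 : ℂ)] fun y => ‖y‖ ^ q) :
    ∀ k, k < q → ∀ y : ℂ, (p k fun _ => y) = 0 := by
  intro k
  induction k using Nat.strong_induction_on with
  | _ k hk =>
    intro hkq y
    have psum_eq : p.partialSum (k + 1) = fun y => p k fun _ => y := by
      funext z
      refine Finset.sum_eq_single _ (fun b hb hnb => ?_) fun hn => ?_
      · exact hk b ((Finset.mem_range_succ_iff.mp hb).lt_of_ne hnb)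
          (lt_trans ((Finset.mem_range_succ_iff.mp hb).lt_of_ne hnb) hkq) z
      · exact False.elim (hn (Finset.mem_range.mpr (lt_add_one k)))
    have h1 := h.isBigO_sub_partialSum_pow (k + 1)
    simp only [zero_add] at h1
    have h2 : (fun y : ℂ => ‖y‖ ^ q) =O[𝓝 (0 : ℂ)] fun y => ‖y‖ ^ (k + 1) := by
      apply IsBigO.of_bound 1
      filter_upwards [Metric.ball_mem_nhds (0 : ℂ) one_pos] with y hy
      have hy1 : ‖y‖ ≤ 1 := by
        have := Metric.mem_ball.mp hy
        simpa [dist_eq_norm] using this.le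
      simp only [norm_pow, norm_norm, one_mul]
      exact pow_le_pow_of_le_one (norm_nonneg y) hy1 hkq
    have h4 := (hO.trans h2).sub h1
    simp only [sub_sub_cancel] at h4
    rw [psum_eq] at h4
    exact h4.continuousMultilinearMap_apply_eq_zero y

/-- If `G`, `g` are analytic at `0` and `G - g = O(‖y‖^q)`, their iterated derivatives
at `0` agree below order `q`. -/
lemma iteratedDeriv_eq_of_isBigO {G g : ℂ → ℂ} (hG : AnalyticAt ℂ G 0)
    (hg : AnalyticAt ℂ g 0) {q : ℕ}
    (hO : (fun y => G y - g y) =O[𝓝 (0 : ℂ)] fun y => ‖y‖ ^ q) :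
    ∀ k < q, iteratedDeriv k G 0 = iteratedDeriv k g 0 := by
  obtain ⟨p, hp⟩ := hG
  obtain ⟨p', hp'⟩ := hg
  have hsub : HasFPowerSeriesAt (fun y => G y - g y) (p - p') 0 := hp.sub hp'
  have key := coeff_zero_of_isBigO hsub hO
  intro k hk
  obtain ⟨r, hr⟩ := hp
  obtain ⟨r', hr'⟩ := hp'
  have e1 : (Nat.factorial k : ℕ) • (p k fun _ => (1 : ℂ)) = iteratedDeriv k G 0 := by
    rw [iteratedDeriv_eq_iteratedFDeriv]
    exact hr.factorial_smul 1 k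
  have e2 : (Nat.factorial k : ℕ) • (p' k fun _ => (1 : ℂ)) = iteratedDeriv k g 0 := by
    rw [iteratedDeriv_eq_iteratedFDeriv]
    exact hr'.factorial_smul 1 k
  have e3 : (p k fun _ => (1 : ℂ)) = p' k fun _ => (1 : ℂ) := by
    have h0 := key k hk 1
    have h1 : (p k fun _ => (1 : ℂ)) - (p' k fun _ => (1 : ℂ)) = 0 := h0
    exact sub_eq_zero.mp h1
  rw [← e1, ← e2, e3]

/-- The key analytic estimate: perturbing the arc by `u y^q` changes the composed
function by `O(‖y‖^q)`. -/
lemma comp_sub_isBigO (F : ℂ × ℂ → ℂ) (hF : AnalyticAt ℂ F (0, 0))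
    (α : ℂ → ℂ) (hα : AnalyticAt ℂ α 0) (hα0 : α 0 = 0) (q : ℕ) (hq : 1 ≤ q) (u : ℂ) :
    (fun y => F (α y + u * y ^ q, y) - F (α y, y)) =O[𝓝 (0 : ℂ)] fun y => ‖y‖ ^ q := by
  obtain ⟨K, s, hs, hK⟩ := hF.hasStrictFDerivAt.exists_lipschitzOnWith
  have hcont : ContinuousAt (fun y : ℂ => (α y + u * y ^ q, y)) 0 := by
    apply ContinuousAt.prodMk
    · exact hα.continuousAt.add (continuousAt_const.mul (continuousAt_id.pow q))
    · exact continuousAt_id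
  have h00 : (fun y : ℂ => (α y + u * y ^ q, y)) 0 = (0, 0) := by
    simp [hα0, zero_pow (by omega : q ≠ 0)]
  have hβ : ∀ᶠ y in 𝓝 (0 : ℂ), (α y + u * y ^ q, y) ∈ s := by
    have := hcont.preimage_mem_nhds (h00 ▸ hs)
    filter_upwards [this] with y hy using hy
  have hγ : ∀ᶠ y in 𝓝 (0 : ℂ), ((α y, y) : ℂ × ℂ) ∈ s := by
    have hcont' : ContinuousAt (fun y : ℂ => ((α y, y) : ℂ × ℂ)) 0 :=
      ContinuousAt.prodMk hα.continuousAt continuousAt_id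
    have h00' : (fun y : ℂ => ((α y, y) : ℂ × ℂ)) 0 = (0, 0) := by simp [hα0]
    have := hcont'.preimage_mem_nhds (h00' ▸ hs)
    filter_upwards [this] with y hy using hy
  apply IsBigO.of_bound ((K : ℝ) * ‖u‖)
  filter_upwards [hβ, hγ] with y hy1 hy2
  have hdist : dist ((α y + u * y ^ q, y) : ℂ × ℂ) ((α y, y) : ℂ × ℂ) = ‖u * y ^ q‖ := by
    rw [Prod.dist_eq]
    simp only [dist_eq_norm, add_sub_cancel_left, sub_self, norm_zero]
    exact max_eq_left (norm_nonneg _)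
  calc ‖F (α y + u * y ^ q, y) - F (α y, y)‖
      = dist (F (α y + u * y ^ q, y)) (F (α y, y)) := (dist_eq_norm _ _).symm
    _ ≤ (K : ℝ) * dist ((α y + u * y ^ q, y) : ℂ × ℂ) ((α y, y) : ℂ × ℂ) :=
        hK.dist_le_mul _ hy1 _ hy2
    _ = (K : ℝ) * (‖u‖ * ‖y‖ ^ q) := by rw [hdist, norm_mul, norm_pow]
    _ = (K : ℝ) * ‖u‖ * ‖‖y‖ ^ q‖ := by
        rw [norm_pow, norm_norm]; ring

/-- Let `f` be analytic near `(0,0)` and `α` analytic near `0` with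
`α(0)=0`, such that `y ↦ f_x(α(y),y)` and `y ↦ f_y(α(y),y)` do not both vanish
identically near `0`; let `L` be the minimum of their vanishing orders at `0`. Then for
every `q > L` and every `u ∈ ℂ`, the minimum of the vanishing orders of
`y ↦ f_x(α(y)+u y^q, y)` and `y ↦ f_y(α(y)+u y^q, y)` equals `L`: the gradient order
along an arc is stable under perturbations of sufficiently high degree. -/
theorem gradient_order_stabilization
    (f : ℂ × ℂ → ℂ) (hf : AnalyticAt ℂ f (0, 0))
    (α : ℂ → ℂ) (hα : AnalyticAt ℂ α 0) (hα0 : α 0 = 0)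
    (hne : ¬ ((∀ᶠ y in nhds (0 : ℂ), fderiv ℂ f (α y, y) (1, 0) = 0) ∧
              (∀ᶠ y in nhds (0 : ℂ), fderiv ℂ f (α y, y) (0, 1) = 0)))
    (L : ℕ)
    (hL : min (ord₀ (fun y => fderiv ℂ f (α y, y) (1, 0)))
              (ord₀ (fun y => fderiv ℂ f (α y, y) (0, 1))) = (L : ℕ∞)) :
    ∀ q : ℕ, L < q → ∀ u : ℂ,
      min (ord₀ (fun y => fderiv ℂ f (α y + u * y ^ q, y) (1, 0)))
          (ord₀ (fun y => fderiv ℂ f (α y + u * y ^ q, y) (0, 1))) = (L : ℕ∞) := by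
  intro q hq u
  have hq1 : 1 ≤ q := by omega
  have hfderiv : AnalyticAt ℂ (fderiv ℂ f) (0, 0) := hf.fderiv
  have hFx : AnalyticAt ℂ (fun z : ℂ × ℂ => fderiv ℂ f z (1, 0)) (0, 0) :=
    ((ContinuousLinearMap.apply ℂ ℂ ((1 : ℂ), (0 : ℂ))).analyticAt _).comp hfderiv
  have hFy : AnalyticAt ℂ (fun z : ℂ × ℂ => fderiv ℂ f z (0, 1)) (0, 0) :=
    ((ContinuousLinearMap.apply ℂ ℂ ((0 : ℂ), (1 : ℂ))).analyticAt _).comp hfderiv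
  have hβ : AnalyticAt ℂ (fun y : ℂ => ((α y + u * y ^ q, y) : ℂ × ℂ)) 0 := by
    apply AnalyticAt.prod
    · exact hα.add (analyticAt_const.mul (analyticAt_id.pow q))
    · exact analyticAt_id
  have hγ : AnalyticAt ℂ (fun y : ℂ => ((α y, y) : ℂ × ℂ)) 0 := hα.prod analyticAt_id
  have h00β : (fun y : ℂ => ((α y + u * y ^ q, y) : ℂ × ℂ)) 0 = (0, 0) := by
    simp [hα0, zero_pow (by omega : q ≠ 0)]
  have h00γ : (fun y : ℂ => ((α y, y) : ℂ × ℂ)) 0 = (0, 0) := by simp [hα0]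
  have hGx : AnalyticAt ℂ (fun y => fderiv ℂ f (α y + u * y ^ q, y) (1, 0)) 0 := by
    have h2 := AnalyticAt.comp_of_eq (hFx) (hβ) (h00β)
    exact h2
  have hGy : AnalyticAt ℂ (fun y => fderiv ℂ f (α y + u * y ^ q, y) (0, 1)) 0 := by
    have h2 := AnalyticAt.comp_of_eq (hFy) (hβ) (h00β)
    exact h2
  have hgx : AnalyticAt ℂ (fun y => fderiv ℂ f (α y, y) (1, 0)) 0 := by
    have h2 := AnalyticAt.comp_of_eq (hFx) (hγ) (h00γ)
    exact h2
  have hgy : AnalyticAt ℂ (fun y => fderiv ℂ f (α y, y) (0, 1)) 0 := by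
    have h2 := AnalyticAt.comp_of_eq (hFy) (hγ) (h00γ)
    exact h2
  have keyx : ∀ k < q,
      iteratedDeriv k (fun y => fderiv ℂ f (α y + u * y ^ q, y) (1, 0)) 0 =
      iteratedDeriv k (fun y => fderiv ℂ f (α y, y) (1, 0)) 0 :=
    iteratedDeriv_eq_of_isBigO hGx hgx
      (comp_sub_isBigO (fun z : ℂ × ℂ => fderiv ℂ f z (1, 0)) hFx α hα hα0 q hq1 u)
  have keyy : ∀ k < q,
      iteratedDeriv k (fun y => fderiv ℂ f (α y + u * y ^ q, y) (0, 1)) 0 =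
      iteratedDeriv k (fun y => fderiv ℂ f (α y, y) (0, 1)) 0 :=
    iteratedDeriv_eq_of_isBigO hGy hgy
      (comp_sub_isBigO (fun z : ℂ × ℂ => fderiv ℂ f z (0, 1)) hFy α hα hα0 q hq1 u)
  have hminle := le_min_iff.mp hL.ge
  rcases min_eq_iff.mp hL with ⟨hgxL, _⟩ | ⟨hgyL, _⟩
  · obtain ⟨hnz, hzero⟩ := ord0_eq_iff.mp hgxL
    have hGxord : ord₀ (fun y => fderiv ℂ f (α y + u * y ^ q, y) (1, 0)) = (L : ℕ∞) :=
      ord0_eq_of (by rw [keyx L hq]; exact hnz)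
        (fun k hk => by rw [keyx k (lt_trans hk hq)]; exact hzero k hk)
    have hGyord : (L : ℕ∞) ≤ ord₀ (fun y => fderiv ℂ f (α y + u * y ^ q, y) (0, 1)) :=
      le_ord0 (fun k hk => by
        rw [keyy k (lt_trans hk hq)]
        exact deriv_zero_of_le_ord0 hminle.2 k hk)
    rw [hGxord] at *
    exact min_eq_left hGyord
  · obtain ⟨hnz, hzero⟩ := ord0_eq_iff.mp hgyL
    have hGyord : ord₀ (fun y => fderiv ℂ f (α y + u * y ^ q, y) (0, 1)) = (L : ℕ∞) :=
      ord0_eq_of (by rw [keyy L hq]; exact hnz)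
        (fun k hk => by rw [keyy k (lt_trans hk hq)]; exact hzero k hk)
    have hGxord : (L : ℕ∞) ≤ ord₀ (fun y => fderiv ℂ f (α y + u * y ^ q, y) (1, 0)) :=
      le_ord0 (fun k hk => by
        rw [keyx k (lt_trans hk hq)]
        exact deriv_zero_of_le_ord0 hminle.1 k hk)
    rw [hGyord] at *
    exact min_eq_right hGxord
end
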